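/- Relaxation consistency: let L be the graph Laplacian of a finite strongly connected directed graph, Z ⊆ V nonempty, T ⊆ V \ Z, and e_T the indicator of T. Let u_ε solve (L u_ε)(i) + ε^{−1} e_T(i)(u_ε(i) − 1) = 0 for i ∈ V \ Z with u_ε = g on Z (g : Z → [0,1]), and let u solve (Lu)(i) = 0 for i ∈ V \ (Z ∪ T), u = 1 on T, u = g on Z. Then u_ε(i) → u(i) for every i ∈ V as ε → 0⁺. -/

import Mathlib

open Finset

/-- Adjacency matrix (entries 0/1) of a directed graph given by edge relation `E`. -/
def adjM {V : Type*} [Fintype V] (E : V → V → Prop) [DecidableRel E] : Matrix V V ℝ :=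
  Matrix.of fun i j => if E i j then 1 else 0

/-- Out-degree graph Laplacian `L = D - A`. -/
noncomputable def lapM {V : Type*} [Fintype V] [DecidableEq V] (E : V → V → Prop)
    [DecidableRel E] : Matrix V V ℝ :=
  Matrix.diagonal (fun i => ∑ j, adjM E i j) - adjM E

lemma lap_apply {V : Type*} [Fintype V] [DecidableEq V] (E : V → V → Prop) [DecidableRel E]
    (v : V → ℝ) (i : V) :
    (lapM E).mulVec v i = ∑ j, (if E i j then v i - v j else 0) := by
  have hA : (adjM E).mulVec v i = ∑ j, (adjM E) i j * v j := rfl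
  rw [lapM, Matrix.sub_mulVec, Pi.sub_apply, Matrix.mulVec_diagonal, Finset.sum_mul, hA,
    ← Finset.sum_sub_distrib]
  refine Finset.sum_congr rfl fun j _ => ?_
  simp only [adjM, Matrix.of_apply]
  split <;> simp

/-- If the laplacian of `w` vanishes at a maximum point `i` not in `Z ∪ T`, the
maximum propagates along a path to `Z`, so it is attained somewhere on `Z ∪ T`. -/
lemma reach_max {V : Type*} [Fintype V] [DecidableEq V] (E : V → V → Prop) [DecidableRel E]
    (Z T : Finset V) (w : V → ℝ) (m : ℝ) (hub : ∀ j, w j ≤ m)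
    (hlap : ∀ i, i ∉ Z → i ∉ T → (lapM E).mulVec w i = 0)
    (i z : V) (hz : z ∈ Z) (hpath : Relation.ReflTransGen E i z) (hi : w i = m) :
    ∃ k, (k ∈ Z ∨ k ∈ T) ∧ w k = m := by
  induction hpath using Relation.ReflTransGen.head_induction_on with
  | refl => exact ⟨z, Or.inl hz, hi⟩
  | head hab hbz ih =>
    rename_i a b
    by_cases haZ : a ∈ Z
    · exact ⟨a, Or.inl haZ, hi⟩
    by_cases haT : a ∈ T
    · exact ⟨a, Or.inr haT, hi⟩
    have h0 : ∑ j, (if E a j then w a - w j else 0) = 0 := by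
      rw [← lap_apply]; exact hlap a haZ haT
    have hterm : ∀ j ∈ Finset.univ, (0:ℝ) ≤ (if E a j then w a - w j else 0) := by
      intro j _
      split
      · linarith [hub j, hi.ge]
      · exact le_refl _
    have hb0 := (Finset.sum_eq_zero_iff_of_nonneg hterm).mp h0 b (Finset.mem_univ b)
    rw [if_pos hab] at hb0
    exact ih (by linarith)

/-- Discrete maximum principle for the penalized problem: any `w` vanishing on `Z`,
harmonic off `Z ∪ T`, and with `L w + ε⁻¹ w ≤ M` on `T ∖ Z`, satisfies `w ≤ ε * M`. -/
lemma max_principle {V : Type*} [Fintype V] [DecidableEq V] (E : V → V → Prop)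
    [DecidableRel E] (hconn : ∀ i j : V, Relation.ReflTransGen E i j)
    (Z T : Finset V) (hZ : Z.Nonempty) (w : V → ℝ) (M ε : ℝ) (hM : 0 ≤ M) (hε : 0 < ε)
    (hwZ : ∀ i ∈ Z, w i = 0)
    (hw0 : ∀ i, i ∉ Z → i ∉ T → (lapM E).mulVec w i = 0)
    (hwT : ∀ i ∈ T, i ∉ Z → (lapM E).mulVec w i + ε⁻¹ * w i ≤ M) :
    ∀ i, w i ≤ ε * M := by
  obtain ⟨z, hz⟩ := hZ
  have huniv : (Finset.univ : Finset V).Nonempty := ⟨z, Finset.mem_univ z⟩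
  obtain ⟨i₀, -, hmax⟩ := Finset.exists_max_image Finset.univ w huniv
  have hub : ∀ j, w j ≤ w i₀ := fun j => hmax j (Finset.mem_univ j)
  obtain ⟨k, hk, hwk⟩ := reach_max E Z T w (w i₀) hub hw0 i₀ z hz (hconn i₀ z) rfl
  -- it suffices to bound the maximum value `w i₀`
  have hm : w i₀ ≤ ε * M := by
    rcases hk with hkZ | hkT
    · rw [← hwk, hwZ k hkZ]; positivity
    by_cases hkZ : k ∈ Z
    · rw [← hwk, hwZ k hkZ]; positivity
    · -- `k ∈ T`, and the laplacian is nonnegative at the max point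
      have hlapnn : 0 ≤ (lapM E).mulVec w k := by
        rw [lap_apply]
        refine Finset.sum_nonneg fun j _ => ?_
        split
        · linarith [hub j, hwk.ge]
        · exact le_refl _
      have := hwT k hkT hkZ
      have h1 : ε⁻¹ * w k ≤ M := by linarith
      rw [← hwk]
      calc w k = ε * (ε⁻¹ * w k) := by field_simp
        _ ≤ ε * M := by exact mul_le_mul_of_nonneg_left h1 hε.le
  exact fun i => le_trans (hub i) hm

/-- Relaxation consistency: the solutions `u_ε` of the penalized problem, which
replaces the Dirichlet condition `u = 1` on `T` with a penalty term
`ε⁻¹ e_T ⊙ (u − 1)`, converge as `ε → 0⁺` to the solution `u` of the hard-constrained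
Dirichlet problem, at every vertex. -/
theorem stmt15 {V : Type*} [Fintype V] [DecidableEq V]
    (E : V → V → Prop) [DecidableRel E]
    (hconn : ∀ i j : V, Relation.ReflTransGen E i j)
    (hdeg : ∀ i : V, ∃ j, E i j)
    (Z T : Finset V) (hZ : Z.Nonempty) (hT : ∀ i ∈ T, i ∉ Z)
    (g : V → ℝ) (hg : ∀ i ∈ Z, g i ∈ Set.Icc (0 : ℝ) 1)
    (uF : ℝ → V → ℝ) (u : V → ℝ)
    (huFeq : ∀ ε : ℝ, 0 < ε → ∀ i ∉ Z,
      (lapM E).mulVec (uF ε) i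
        + ε⁻¹ * ((if i ∈ T then (1 : ℝ) else 0) * (uF ε i - 1)) = 0)
    (huFbc : ∀ ε : ℝ, 0 < ε → ∀ i ∈ Z, uF ε i = g i)
    (hueq : ∀ i, i ∉ Z → i ∉ T → (lapM E).mulVec u i = 0)
    (huT : ∀ i ∈ T, u i = 1)
    (hubc : ∀ i ∈ Z, u i = g i) :
    ∀ i : V, Filter.Tendsto (fun ε => uF ε i)
      (nhdsWithin 0 (Set.Ioi 0)) (nhds (u i)) := by
  classical
  set M : ℝ := ∑ j, |(lapM E).mulVec u j| with hMdef
  have hM : 0 ≤ M := Finset.sum_nonneg fun j _ => abs_nonneg _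
  have hMb : ∀ i, |(lapM E).mulVec u i| ≤ M := fun i =>
    Finset.single_le_sum (fun j _ => abs_nonneg ((lapM E).mulVec u j)) (Finset.mem_univ i)
  -- the two-sided bound |uF ε i - u i| ≤ ε * M
  have key : ∀ ε : ℝ, 0 < ε → ∀ i, |uF ε i - u i| ≤ ε * M := by
    intro ε hε
    set w : V → ℝ := fun i => uF ε i - u i with hwdef
    have hwvec : w = uF ε - u := rfl
    have hlapw : ∀ i, (lapM E).mulVec w i = (lapM E).mulVec (uF ε) i - (lapM E).mulVec u i := by
      intro i
      rw [hwvec, Matrix.mulVec_sub]; rfl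
    have hwZ : ∀ i ∈ Z, w i = 0 := by
      intro i hi; simp [hwdef, huFbc ε hε i hi, hubc i hi]
    have hw0 : ∀ i, i ∉ Z → i ∉ T → (lapM E).mulVec w i = 0 := by
      intro i hiZ hiT
      have h1 := huFeq ε hε i hiZ
      rw [if_neg hiT] at h1
      rw [hlapw i, hueq i hiZ hiT]
      linarith [h1]
    -- bound `w` above
    have hupper : ∀ i, w i ≤ ε * M := by
      refine max_principle E hconn Z T hZ w M ε hM hε hwZ hw0 ?_
      intro i hiT hiZ
      have h1 := huFeq ε hε i hiZ
      rw [if_pos hiT, one_mul] at h1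
      have hu1 : u i = 1 := huT i hiT
      have hwi : uF ε i - 1 = w i := by rw [hwdef]; simp [hu1]
      rw [hwi] at h1
      have : (lapM E).mulVec w i + ε⁻¹ * w i = -(lapM E).mulVec u i := by
        rw [hlapw i]; linarith
      rw [this]
      exact le_trans (neg_le_abs _) (hMb i)
    -- bound `w` below: apply the principle to `-w`
    have hlower : ∀ i, -w i ≤ ε * M := by
      refine max_principle E hconn Z T hZ (fun i => -w i) M ε hM hε
        (fun i hi => by simp [hwZ i hi]) ?_ ?_
      · intro i hiZ hiT
        have : (fun i => -w i) = -w := rfl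
        rw [this, Matrix.mulVec_neg, Pi.neg_apply, hw0 i hiZ hiT, neg_zero]
      · intro i hiT hiZ
        have hneg : (fun i => -w i) = -w := rfl
        have h1 := huFeq ε hε i hiZ
        rw [if_pos hiT, one_mul] at h1
        have hu1 : u i = 1 := huT i hiT
        have hwi : uF ε i - 1 = w i := by rw [hwdef]; simp [hu1]
        rw [hwi] at h1
        have h2 : (lapM E).mulVec w i + ε⁻¹ * w i = -(lapM E).mulVec u i := by
          rw [hlapw i]; linarith
        rw [hneg, Matrix.mulVec_neg, Pi.neg_apply]
        have h3 : -(lapM E).mulVec w i + ε⁻¹ * (-w) i = (lapM E).mulVec u i := by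
          simp only [Pi.neg_apply]; linarith [h2]
        rw [show -(lapM E).mulVec w i + ε⁻¹ * -w i = (lapM E).mulVec u i from h3]
        exact le_trans (le_abs_self _) (hMb i)
    intro i
    rw [abs_sub_le_iff]
    constructor
    · exact hupper i
    · have := hlower i
      simpa [hwdef] using this
  -- conclude by squeezing
  intro i
  have hle : ∀ ε ∈ Set.Ioi (0:ℝ), u i - ε * M ≤ uF ε i ∧ uF ε i ≤ u i + ε * M := by
    intro ε hε
    have h := key ε hε i
    rw [abs_sub_le_iff] at h
    constructor <;> linarith [h.1, h.2]
  have hlim : Filter.Tendsto (fun ε : ℝ => ε * M) (nhdsWithin 0 (Set.Ioi 0)) (nhds 0) := by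
    have : Filter.Tendsto (fun ε : ℝ => ε * M) (nhds 0) (nhds (0 * M)) :=
      (continuous_id.mul continuous_const).tendsto 0
    rw [zero_mul] at this
    exact this.mono_left nhdsWithin_le_nhds
  have h1 : Filter.Tendsto (fun ε : ℝ => u i - ε * M) (nhdsWithin 0 (Set.Ioi 0)) (nhds (u i)) := by
    have := (tendsto_const_nhds (x := u i) (f := nhdsWithin (0:ℝ) (Set.Ioi 0))).sub hlim
    simpa using this
  have h2 : Filter.Tendsto (fun ε : ℝ => u i + ε * M) (nhdsWithin 0 (Set.Ioi 0)) (nhds (u i)) := by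
    have := (tendsto_const_nhds (x := u i) (f := nhdsWithin (0:ℝ) (Set.Ioi 0))).add hlim
    simpa using this
  refine tendsto_of_tendsto_of_tendsto_of_le_of_le' h1 h2 ?_ ?_
  · filter_upwards [self_mem_nhdsWithin] with ε hε using (hle ε hε).1
  · filter_upwards [self_mem_nhdsWithin] with ε hε using (hle ε hε).2
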